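/- Let F = (A, R) be a finite AAF with n = |A| and adjacency matrix M over ℚ. For arguments a, b: a ⪰^dbs_F b holds if and only if either (i) for all i with 1 ≤ i ≤ 2n − 1 the column sums of M^i at a and b agree, or (ii) at the smallest i ≤ 2n − 1 where they differ, the column sum at a is smaller than at b when i is odd, and larger when i is even. -/

import Mathlib

/-!
The column sum of `M ^ i` at `v` counts the walks of length `i` ending in `v`, so `Dis_i` is a
signed column sum and the lexicographic comparison is decided at the first index where the
column sums at `a` and `b` differ. By Cayley–Hamilton every power of `M` is a linear combination
of `M ^ 0, …, M ^ (n - 1)`, so column sums agreeing up to `n - 1` agree forever: the first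
difference, if any, occurs at an index `i ≤ n - 1 ≤ 2n - 1`.
-/

/-- The number of walks of length `i` ending in `v`: tuples `(z_1, …, z_i, v)`
with all consecutive pairs edges of `E` (the attack relation). -/
def walkCount {V : Type*} [Fintype V] [DecidableEq V]
    (E : V → V → Prop) [DecidableRel E] (i : ℕ) (v : V) : ℕ :=
  Fintype.card {f : Fin (i + 1) → V //
    (∀ j : Fin i, E (f j.castSucc) (f j.succ)) ∧ f (Fin.last i) = v}

/-- The discussion count `Dis_i(x)`. -/
def Dis {V : Type*} [Fintype V] [DecidableEq V]
    (E : V → V → Prop) [DecidableRel E] (i : ℕ) (x : V) : ℤ :=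
  if Odd i then -(walkCount E i x : ℤ) else (walkCount E i x : ℤ)

/-- `a ⪰^dbs b`: the sequence `(Dis_i(a))_{i ≥ 1}` is lexicographically ≥ `(Dis_i(b))_{i ≥ 1}`. -/
def dbsGE {V : Type*} [Fintype V] [DecidableEq V]
    (E : V → V → Prop) [DecidableRel E] (a b : V) : Prop :=
  (∀ i : ℕ, 1 ≤ i → Dis E i a = Dis E i b) ∨
    ∃ k : ℕ, 1 ≤ k ∧ Dis E k a > Dis E k b ∧
      ∀ j : ℕ, 1 ≤ j → j < k → Dis E j a = Dis E j b

open Polynomial in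
theorem Matrix.map_pow_eq_zero_of_forall_lt_card {n R N : Type*} [Fintype n] [DecidableEq n]
    [Nonempty n] [CommRing R] [Nontrivial R] [AddCommGroup N] [Module R N]
    (M : Matrix n n R) (f : Matrix n n R →ₗ[R] N)
    (h : ∀ j < Fintype.card n, f (M ^ j) = 0) (k : ℕ) : f (M ^ k) = 0 := by
  have hdeg : (X ^ k %ₘ M.charpoly).natDegree < Fintype.card n := by
    have hne : M.charpoly ≠ 1 := fun h1 => by
      simpa [h1, eq_comm] using M.charpoly_natDegree_eq_dim
    simpa using natDegree_modByMonic_lt (X ^ k) M.charpoly_monic hne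
  rw [pow_eq_aeval_mod_charpoly, aeval_eq_sum_range' hdeg, map_sum]
  exact Finset.sum_eq_zero fun j hj => by
    rw [map_smul, h j (Finset.mem_range.mp hj), smul_zero]

theorem Matrix.colSum_pow_eq_of_forall_lt_card {n R : Type*} [Fintype n] [DecidableEq n]
    [CommRing R] [Nontrivial R] (M : Matrix n n R) (a b : n)
    (h : ∀ j < Fintype.card n, ∑ u, (M ^ j) u a = ∑ u, (M ^ j) u b) (k : ℕ) :
    ∑ u, (M ^ k) u a = ∑ u, (M ^ k) u b := by
  have : Nonempty n := ⟨a⟩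
  let f : Matrix n n R →ₗ[R] R :=
    ∑ u, entryLinearMap R R u a - ∑ u, entryLinearMap R R u b
  have hf (N : Matrix n n R) : f N = ∑ u, N u a - ∑ u, N u b := by simp [f]
  simpa [hf, sub_eq_zero] using
    M.map_pow_eq_zero_of_forall_lt_card f (fun j hj => by simpa [hf, sub_eq_zero] using h j hj) k
section walkCount

variable {V : Type*} [Fintype V] [DecidableEq V] (E : V → V → Prop) [DecidableRel E]

theorem walkCount_zero (v : V) : walkCount E 0 v = 1 := by
  rw [walkCount, Fintype.card_eq_one_iff]
  refine ⟨⟨fun _ => v, finZeroElim, rfl⟩, fun ⟨f, _, hv⟩ => ?_⟩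
  ext x
  rw [Subsingleton.elim (α := Fin 1) x (Fin.last 0)]
  exact hv

theorem walkCount_succ (i : ℕ) (v : V) :
    walkCount E (i + 1) v = ∑ w with E w v, walkCount E i w := by
  -- Split by the penultimate vertex `w`: dropping the last vertex `v` is a bijection onto the
  -- walks of length `i` ending in `w` if `E w v`, and the fibre is empty otherwise.
  rw [walkCount, Fintype.card_subtype, Finset.card_eq_sum_card_fiberwise
    (f := fun f : Fin (i + 2) → V => f (Fin.last i).castSucc) (t := Finset.univ)
    (fun _ _ => Finset.mem_univ _), Finset.sum_filter]
  refine Finset.sum_congr rfl fun w _ => ?_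
  split_ifs with hE
  · rw [walkCount, Fintype.card_subtype]
    refine Finset.card_nbij' Fin.init (fun g => Fin.snoc g v) ?_ ?_ ?_ ?_
    · intro f hf
      simp only [Finset.mem_coe, Finset.mem_filter, Finset.mem_univ, true_and] at hf ⊢
      obtain ⟨⟨hwalk, -⟩, rfl⟩ := hf
      exact ⟨fun j => hwalk j.castSucc, rfl⟩
    · intro g hg
      simp only [Finset.mem_coe, Finset.mem_filter, Finset.mem_univ, true_and] at hg ⊢
      obtain ⟨hwalk, rfl⟩ := hg
      refine ⟨⟨Fin.lastCases (by simpa using hE) (fun j => ?_), by simp⟩, by simp⟩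
      rw [Fin.succ_castSucc, Fin.snoc_castSucc, Fin.snoc_castSucc]
      exact hwalk j
    · intro f hf
      simp only [Finset.mem_coe, Finset.mem_filter, Finset.mem_univ, true_and] at hf
      obtain ⟨⟨-, rfl⟩, -⟩ := hf
      exact Fin.snoc_init_self f
    · intro g _
      simp
  · refine Finset.card_eq_zero.mpr (Finset.filter_eq_empty_iff.mpr ?_)
    rintro f hf rfl
    simp only [Finset.mem_filter, Finset.mem_univ, true_and] at hf
    obtain ⟨hwalk, hv⟩ := hf
    exact hE (by simpa [hv] using hwalk (Fin.last i))

theorem walkCount_cast_eq_sum_pow_apply {R : Type*} [Semiring R] (M : Matrix V V R)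
    (hM : ∀ x y, M x y = if E x y then 1 else 0) (i : ℕ) (v : V) :
    (walkCount E i v : R) = ∑ u, (M ^ i) u v := by
  induction i generalizing v with
  | zero => simp [walkCount_zero, Matrix.one_apply]
  | succ i ih =>
    simp only [walkCount_succ, pow_succ, Matrix.mul_apply, Nat.cast_sum, Finset.sum_filter]
    rw [Finset.sum_comm]
    refine Finset.sum_congr rfl fun w _ => ?_
    rw [← Finset.sum_mul, ← ih, hM]
    split_ifs <;> simp

end walkCount

section Dis

variable {V : Type*} [Fintype V] [DecidableEq V] (E : V → V → Prop) [DecidableRel E]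

theorem Dis_eq_Dis_iff (i : ℕ) (a b : V) :
    Dis E i a = Dis E i b ↔ walkCount E i a = walkCount E i b := by
  unfold Dis
  split_ifs <;> simp

theorem Dis_lt_Dis_iff (i : ℕ) (a b : V) :
    Dis E i b < Dis E i a ↔
      if Odd i then walkCount E i a < walkCount E i b else walkCount E i b < walkCount E i a := by
  unfold Dis
  split_ifs <;> simp

end Dis

theorem lexGE_iff_truncated {β : Type*} [Preorder β] {x y : ℕ → β} (N : ℕ)
    (h : (∀ i, 1 ≤ i → i ≤ N → x i = y i) → ∀ i, 1 ≤ i → x i = y i) :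
    ((∀ i, 1 ≤ i → x i = y i) ∨ ∃ k, 1 ≤ k ∧ x k > y k ∧ ∀ j, 1 ≤ j → j < k → x j = y j) ↔
      ((∀ i, 1 ≤ i → i ≤ N → x i = y i) ∨
        ∃ k, 1 ≤ k ∧ k ≤ N ∧ x k ≠ y k ∧ (∀ j, 1 ≤ j → j < k → x j = y j) ∧ x k > y k) := by
  constructor
  · rintro (heq | ⟨k, hk, hgt, hbefore⟩)
    · exact .inl fun i hi _ => heq i hi
    · refine .inr ⟨k, hk, ?_, hgt.ne', hbefore, hgt⟩
      by_contra! hNk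
      exact hgt.ne' (h (fun i hi hiN => hbefore i hi (by omega)) k hk)
  · rintro (heq | ⟨k, hk, -, -, hbefore, hgt⟩)
    · exact .inl (h heq)
    · exact .inr ⟨k, hk, hgt, hbefore⟩

theorem stmt14 {V : Type*} [Fintype V] [DecidableEq V]
    (R : V → V → Prop) [DecidableRel R]
    (M : Matrix V V ℚ) (hM : ∀ x y, M x y = if R x y then 1 else 0)
    (a b : V) :
    dbsGE R a b ↔
      ((∀ i : ℕ, 1 ≤ i → i ≤ 2 * Fintype.card V - 1 →
          ∑ u : V, (M ^ i) u a = ∑ u : V, (M ^ i) u b) ∨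
        (∃ i : ℕ, 1 ≤ i ∧ i ≤ 2 * Fintype.card V - 1 ∧
          ∑ u : V, (M ^ i) u a ≠ ∑ u : V, (M ^ i) u b ∧
          (∀ j : ℕ, 1 ≤ j → j < i →
            ∑ u : V, (M ^ j) u a = ∑ u : V, (M ^ j) u b) ∧
          (if Odd i then ∑ u : V, (M ^ i) u a < ∑ u : V, (M ^ i) u b
           else ∑ u : V, (M ^ i) u a > ∑ u : V, (M ^ i) u b))) := by
  have hcount := walkCount_cast_eq_sum_pow_apply R M hM
  have hEq (i : ℕ) : Dis R i a = Dis R i b ↔ ∑ u, (M ^ i) u a = ∑ u, (M ^ i) u b := by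
    rw [Dis_eq_Dis_iff, ← hcount, ← hcount, Nat.cast_inj]
  have hGt (i : ℕ) : Dis R i a > Dis R i b ↔
      if Odd i then ∑ u, (M ^ i) u a < ∑ u, (M ^ i) u b
      else ∑ u, (M ^ i) u a > ∑ u, (M ^ i) u b := by
    simp only [gt_iff_lt, Dis_lt_Dis_iff, ← hcount, Nat.cast_lt]
  have hcard : 1 ≤ Fintype.card V := Fintype.card_pos_iff.mpr ⟨a⟩
  have hdetermined (h : ∀ i, 1 ≤ i → i ≤ 2 * Fintype.card V - 1 → Dis R i a = Dis R i b)
      (i : ℕ) (_ : 1 ≤ i) : Dis R i a = Dis R i b := by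
    refine (hEq i).mpr (M.colSum_pow_eq_of_forall_lt_card a b (fun j hj => ?_) i)
    rcases j with _ | j
    · simp [Matrix.one_apply]
    · exact (hEq _).mp (h _ (by omega) (by omega))
  rw [dbsGE, lexGE_iff_truncated _ hdetermined]
  simp only [ne_eq, hEq, hGt]
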